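/- Let E be a real inner product space and let f, g : E → ℝ be twice continuously differentiable with M-Lipschitz Hessians. Fix θ ∈ E and α > 0, and set θ̃_g = θ − α·∇g(θ) and θ̃_f = θ − α·∇f(θ). Let h(x) = ⟪∇f(x), ∇g(x)⟫. Then the symmetrized updated gradient satisfies ‖(∇f(θ̃_g) + ∇g(θ̃_f)) − (∇f(θ) + ∇g(θ)) + α·∇h(θ)‖ ≤ (M/2)·α²·(‖∇f(θ)‖² + ‖∇g(θ)‖²). In particular, averaged over the two orderings of the pair of tasks, one gradient step on one task followed by evaluating the other task's gradient equals the plain gradient minus α times the gradient of the gradient-alignment term, up to O(α²). -/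

import Mathlib

/-!
With a Lipschitz Hessian, the gradient has a second-order Taylor expansion
`∇f (θ + v) = ∇f θ + ∇²f θ v + O(‖v‖²)` with remainder at most `M / 2 ‖v‖²`. Taking `v = -α ∇g θ`
for `f` and `v = -α ∇f θ` for `g`, the first-order terms add up to `-α (∇²f θ ∇g θ + ∇²g θ ∇f θ)`,
which is `-α ∇⟪∇f, ∇g⟫ θ` because Hessians are self-adjoint.
-/

open RealInnerProductSpace InnerProductSpace Set

section Taylor

variable {E F : Type*} [NormedAddCommGroup E] [NormedSpace ℝ E]
  [NormedAddCommGroup F] [NormedSpace ℝ F]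

/- `φ t = G (x + t • v) - G x - t • G' x v` has `‖φ' t‖ ≤ M ‖v‖² t`, the derivative of
`M / 2 ‖v‖² t²`; compare the two on `[0, 1]`. -/
theorem norm_image_add_sub_sub_fderiv_le {G : E → F} {M : ℝ} {x : E}
    (hG : Differentiable ℝ G) (hLip : ∀ y, ‖fderiv ℝ G y - fderiv ℝ G x‖ ≤ M * ‖y - x‖)
    (v : E) :
    ‖G (x + v) - G x - fderiv ℝ G x v‖ ≤ M / 2 * ‖v‖ ^ 2 := by
  set φ : ℝ → F := fun t => G (x + t • v) - G x - t • fderiv ℝ G x v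
  have hφ : ∀ t : ℝ, HasDerivAt φ (fderiv ℝ G (x + t • v) v - fderiv ℝ G x v) t := by
    intro t
    have hline : HasDerivAt (fun t : ℝ => x + t • v) v t := by
      simpa using ((hasDerivAt_id t).smul_const v).const_add x
    have h := (((hG _).hasFDerivAt.comp_hasDerivAt t hline).sub_const (G x)).sub
      ((hasDerivAt_id t).smul_const (fderiv ℝ G x v))
    rwa [one_smul] at h
  have hB : ∀ t : ℝ, HasDerivAt (fun t => M / 2 * ‖v‖ ^ 2 * t ^ 2) (M * ‖v‖ ^ 2 * t) t := by
    intro t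
    refine ((hasDerivAt_pow 2 t).const_mul (M / 2 * ‖v‖ ^ 2)).congr_deriv ?_
    push_cast
    ring
  have hφ'_le : ∀ t ∈ Ico (0 : ℝ) 1,
      ‖fderiv ℝ G (x + t • v) v - fderiv ℝ G x v‖ ≤ M * ‖v‖ ^ 2 * t := by
    intro t ht
    calc ‖fderiv ℝ G (x + t • v) v - fderiv ℝ G x v‖
        ≤ ‖fderiv ℝ G (x + t • v) - fderiv ℝ G x‖ * ‖v‖ :=
          (fderiv ℝ G (x + t • v) - fderiv ℝ G x).le_opNorm v
      _ ≤ M * ‖(x + t • v) - x‖ * ‖v‖ := by gcongr; exact hLip _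
      _ = M * ‖v‖ ^ 2 * t := by
          rw [add_sub_cancel_left, norm_smul, Real.norm_of_nonneg ht.1]; ring
  have hφ1 := image_norm_le_of_norm_deriv_right_le_deriv_boundary
    (fun t _ => (hφ t).continuousAt.continuousWithinAt)
    (fun t _ => (hφ t).hasDerivWithinAt) (by simp [φ]) hB hφ'_le
    (right_mem_Icc.2 zero_le_one)
  simpa [φ] using hφ1

end Taylor

section Hessian

variable {E : Type*} [NormedAddCommGroup E] [InnerProductSpace ℝ E] [CompleteSpace E]
  {f g : E → ℝ} {x : E}

theorem ContDiffAt.differentiableAt_gradient (hf : ContDiffAt ℝ 2 f x) :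
    DifferentiableAt ℝ (gradient f) x :=
  (toDual ℝ E).symm.toContinuousLinearEquiv.differentiableAt.comp x
    ((hf.fderiv_right le_rfl).differentiableAt one_ne_zero)

theorem ContDiff.differentiable_gradient (hf : ContDiff ℝ 2 f) :
    Differentiable ℝ (gradient f) :=
  fun _ => hf.contDiffAt.differentiableAt_gradient

theorem inner_fderiv_gradient_apply (x u w : E) :
    ⟪fderiv ℝ (gradient f) x u, w⟫ = fderiv ℝ (fderiv ℝ f) x u w := by
  change ⟪fderiv ℝ ((toDual ℝ E).symm ∘ fderiv ℝ f) x u, w⟫ = _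
  rw [LinearIsometryEquiv.comp_fderiv]
  exact toDual_symm_apply

theorem ContDiffAt.inner_fderiv_gradient_comm (hf : ContDiffAt ℝ 2 f x) (u w : E) :
    ⟪fderiv ℝ (gradient f) x u, w⟫ = ⟪u, fderiv ℝ (gradient f) x w⟫ := by
  rw [inner_fderiv_gradient_apply, real_inner_comm, inner_fderiv_gradient_apply]
  exact (hf.isSymmSndFDerivAt (by simp)).eq u w

theorem ContDiffAt.hasGradientAt_inner_gradient (hf : ContDiffAt ℝ 2 f x)
    (hg : ContDiffAt ℝ 2 g x) :
    HasGradientAt (fun y => ⟪gradient f y, gradient g y⟫)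
      (fderiv ℝ (gradient f) x (gradient g x) + fderiv ℝ (gradient g) x (gradient f x)) x := by
  convert hasFDerivAt_iff_hasGradientAt.mp (hf.differentiableAt_gradient.hasFDerivAt.inner ℝ
    hg.differentiableAt_gradient.hasFDerivAt) using 1
  refine ext_inner_right ℝ fun w => ?_
  simp only [toDual_symm_apply, inner_add_left, ContinuousLinearMap.comp_apply,
    ContinuousLinearMap.prod_apply, fderivInnerCLM_apply]
  rw [hf.inner_fderiv_gradient_comm, hg.inner_fderiv_gradient_comm,
    real_inner_comm (fderiv ℝ (gradient f) x w)]
  ring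

end Hessian

theorem symmetrized_updated_gradient_alignment_general
    {E : Type*} [NormedAddCommGroup E] [InnerProductSpace ℝ E] [CompleteSpace E]
    (f g : E → ℝ) (M : ℝ) (hf : ContDiff ℝ 2 f) (hg : ContDiff ℝ 2 g)
    (hLipf : ∀ x y : E,
      ‖fderiv ℝ (gradient f) x - fderiv ℝ (gradient f) y‖ ≤ M * ‖x - y‖)
    (hLipg : ∀ x y : E,
      ‖fderiv ℝ (gradient g) x - fderiv ℝ (gradient g) y‖ ≤ M * ‖x - y‖)
    (θ : E) (α : ℝ) :
    ‖(gradient f (θ - α • gradient g θ) + gradient g (θ - α • gradient f θ))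
        - (gradient f θ + gradient g θ)
        + α • gradient (fun x : E => ⟪gradient f x, gradient g x⟫) θ‖
      ≤ (M / 2) * α ^ 2 * (‖gradient f θ‖ ^ 2 + ‖gradient g θ‖ ^ 2) := by
  have hTf := norm_image_add_sub_sub_fderiv_le hf.differentiable_gradient
    (hLipf · θ) (-(α • gradient g θ))
  have hTg := norm_image_add_sub_sub_fderiv_le hg.differentiable_gradient
    (hLipg · θ) (-(α • gradient f θ))
  rw [(hf.contDiffAt.hasGradientAt_inner_gradient hg.contDiffAt).gradient]
  calc _ = ‖(gradient f (θ + -(α • gradient g θ)) - gradient f θ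
          - fderiv ℝ (gradient f) θ (-(α • gradient g θ)))
        + (gradient g (θ + -(α • gradient f θ)) - gradient g θ
          - fderiv ℝ (gradient g) θ (-(α • gradient f θ)))‖ := by
        congr 1
        simp only [← sub_eq_add_neg, map_neg, map_smul, smul_add]
        abel
    _ ≤ M / 2 * ‖-(α • gradient g θ)‖ ^ 2 + M / 2 * ‖-(α • gradient f θ)‖ ^ 2 :=
        (norm_add_le _ _).trans (add_le_add hTf hTg)
    _ = (M / 2) * α ^ 2 * (‖gradient f θ‖ ^ 2 + ‖gradient g θ‖ ^ 2) := by
        simp only [norm_neg, norm_smul, Real.norm_eq_abs, mul_pow, sq_abs]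
        ring

/-- **two-task symmetrized form of Theorem 1.** Let `f g : E → ℝ` be twice
continuously differentiable with `M`-Lipschitz Hessians. Fix `θ` and `α > 0`, and set
`θ̃_g = θ − α·∇g(θ)`, `θ̃_f = θ − α·∇f(θ)`, and `h x = ⟪∇f(x), ∇g(x)⟫`. Then
`‖(∇f(θ̃_g) + ∇g(θ̃_f)) − (∇f(θ) + ∇g(θ)) + α·∇h(θ)‖ ≤ (M/2)·α²·(‖∇f(θ)‖² + ‖∇g(θ)‖²)`. -/
theorem symmetrized_updated_gradient_alignment
    {E : Type*} [NormedAddCommGroup E] [InnerProductSpace ℝ E] [CompleteSpace E]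
    (f g : E → ℝ) (M : ℝ) (hf : ContDiff ℝ 2 f) (hg : ContDiff ℝ 2 g)
    (hLipf : ∀ x y : E,
      ‖fderiv ℝ (gradient f) x - fderiv ℝ (gradient f) y‖ ≤ M * ‖x - y‖)
    (hLipg : ∀ x y : E,
      ‖fderiv ℝ (gradient g) x - fderiv ℝ (gradient g) y‖ ≤ M * ‖x - y‖)
    (θ : E) (α : ℝ) (hα : 0 < α) :
    ‖(gradient f (θ - α • gradient g θ) + gradient g (θ - α • gradient f θ))
        - (gradient f θ + gradient g θ)
        + α • gradient (fun x : E => ⟪gradient f x, gradient g x⟫) θ‖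
      ≤ (M / 2) * α ^ 2 * (‖gradient f θ‖ ^ 2 + ‖gradient g θ‖ ^ 2) :=
  symmetrized_updated_gradient_alignment_general f g M hf hg hLipf hLipg θ α
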